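/- Let α > 0 and let m, k be real numbers with m ≥ 2 and k ≥ 2. Then there exists c ∈ (0, 1) such that for every r > 0: −g″(r)/g(r) − m·f′(r)·g′(r)/(f(r)·g(r)) + (k − 1)·(1 − g′(r)²)/g(r)² − g′(r)·h′(r)/(g(r)·h(r)) > 0, where f(r) = r·(1+r²)^(−1/4), g(r) = (π/2)·c·r/arctan r, and h(r) = (1+r²)^(−α/2). -/

import Mathlib

noncomputable def f (r : ℝ) : ℝ := r * (1 + r ^ 2) ^ (-(1 / 4 : ℝ))

noncomputable def g (c r : ℝ) : ℝ := (Real.pi / 2) * c * (r / Real.arctan r)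

noncomputable def h (α r : ℝ) : ℝ := (1 + r ^ 2) ^ (-(α / 2))

/-!
Write `C = (π/2)·c`. The ratios `g'/g`, `g''/g`, `f'/f`, `h'/h` do not depend on `c`, and the
elementary bounds `r/(1+r²) ≤ arctan r ≤ r` and `r²/(1+r²) ≤ arctan² r` (i.e. `sin θ ≤ θ` at
`θ = arctan r`) make each of `g''/g`, `(f'/f)(g'/g)` and `(g'/g)²` at most `2/(1+r²)`, while
`g'/g ≥ 0` and `h' < 0` make the last term helpful. The only `c`-dependent term is
`1/g² = arctan² r/(C² r²) ≥ 1/(C²(1+r²))`, so taking `C = 1/(m+3)` the term `(k-1)/g²`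
dominates everything else.
-/

open Real Filter Topology

lemma arctan_le_self {x : ℝ} (hx : 0 ≤ x) : arctan x ≤ x := by
  simpa only [tan_arctan] using le_tan (arctan_nonneg.2 hx) (arctan_lt_pi_div_two x)

lemma sq_div_one_add_sq_le_arctan_sq (x : ℝ) : x ^ 2 / (1 + x ^ 2) ≤ arctan x ^ 2 := by
  have h := sin_sq_le_sq (x := arctan x)
  rwa [sin_arctan, div_pow, sq_sqrt (by positivity)] at h

lemma div_one_add_sq_le_arctan {x : ℝ} (hx : 0 ≤ x) : x / (1 + x ^ 2) ≤ arctan x := by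
  have h1 : 1 ≤ 1 + x ^ 2 := by nlinarith
  have h2 : (x / (1 + x ^ 2)) ^ 2 ≤ arctan x ^ 2 := by
    calc (x / (1 + x ^ 2)) ^ 2 = x ^ 2 / (1 + x ^ 2) / (1 + x ^ 2) := by ring
      _ ≤ x ^ 2 / (1 + x ^ 2) := div_le_self (by positivity) h1
      _ ≤ arctan x ^ 2 := sq_div_one_add_sq_le_arctan_sq x
  exact (pow_le_pow_iff_left₀ (by positivity) (arctan_nonneg.2 hx) two_ne_zero).1 h2

lemma hasDerivAt_one_add_sq_rpow (q r : ℝ) :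
    HasDerivAt (fun x => (1 + x ^ 2) ^ q) ((1 + r ^ 2) ^ q * (2 * q * r / (1 + r ^ 2))) r := by
  have h0 : (1 + r ^ 2) ≠ 0 := by positivity
  convert ((hasDerivAt_pow 2 r).const_add 1).rpow_const (p := q) (Or.inl h0) using 1
  rw [rpow_sub_one h0]
  field_simp
  ring

lemma hasDerivAt_f {r : ℝ} (hr : r ≠ 0) :
    HasDerivAt f (f r * (1 / r - r / (2 * (1 + r ^ 2)))) r := by
  refine ((hasDerivAt_id r).mul (hasDerivAt_one_add_sq_rpow (-(1 / 4)) r)).congr_deriv ?_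
  simp only [f, id]
  field_simp
  ring

lemma hasDerivAt_h (α r : ℝ) : HasDerivAt (h α) (h α r * (-(α * r / (1 + r ^ 2)))) r := by
  refine (hasDerivAt_one_add_sq_rpow (-(α / 2)) r).congr_deriv ?_
  simp only [h]
  ring

lemma hasDerivAt_g (c : ℝ) {r : ℝ} (hr : r ≠ 0) :
    HasDerivAt (g c) (π / 2 * c * ((arctan r - r / (1 + r ^ 2)) / arctan r ^ 2)) r := by
  have ha : arctan r ≠ 0 := arctan_eq_zero_iff.not.2 hr
  refine (((hasDerivAt_id' r).fun_div (hasDerivAt_arctan r) ha).const_mul (π / 2 * c)).congr_deriv ?_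
  field_simp

lemma hasDerivAt_deriv_g (c : ℝ) {r : ℝ} (hr : r ≠ 0) :
    HasDerivAt (deriv (g c))
      (π / 2 * c * (2 * (r - arctan r) / ((1 + r ^ 2) ^ 2 * arctan r ^ 3))) r := by
  have ha : arctan r ≠ 0 := arctan_eq_zero_iff.not.2 hr
  have h0 : (1 + r ^ 2) ≠ 0 := by positivity
  have hderiv : deriv (g c) =ᶠ[𝓝 r]
      fun x => π / 2 * c * ((arctan x - x / (1 + x ^ 2)) / arctan x ^ 2) := by
    filter_upwards [isOpen_ne.mem_nhds hr] with x hx using (hasDerivAt_g c hx).deriv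
  refine HasDerivAt.congr_of_eventuallyEq ?_ hderiv
  have hsq := (hasDerivAt_pow 2 r).const_add 1
  refine ((((hasDerivAt_arctan r).fun_sub ((hasDerivAt_id' r).fun_div hsq h0)).fun_div
    ((hasDerivAt_arctan r).fun_pow 2) (pow_ne_zero 2 ha)).const_mul (π / 2 * c)).congr_deriv ?_
  field_simp
  ring

section LogDerivatives

variable {c r : ℝ}

lemma logDeriv_f (hr : r ≠ 0) : logDeriv f r = 1 / r - r / (2 * (1 + r ^ 2)) := by
  have hf : f r ≠ 0 := mul_ne_zero hr (rpow_pos_of_pos (by positivity) _).ne'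
  rw [logDeriv_apply, (hasDerivAt_f hr).deriv, mul_div_cancel_left₀ _ hf]

lemma logDeriv_h (α r : ℝ) : logDeriv (h α) r = -(α * r / (1 + r ^ 2)) := by
  have hh : h α r ≠ 0 := (rpow_pos_of_pos (by positivity) _).ne'
  rw [logDeriv_apply, (hasDerivAt_h α r).deriv, mul_div_cancel_left₀ _ hh]

lemma logDeriv_g (hc : c ≠ 0) (hr : r ≠ 0) :
    logDeriv (g c) r = (arctan r - r / (1 + r ^ 2)) / (r * arctan r) := by
  rw [logDeriv_apply, (hasDerivAt_g c hr).deriv, g]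
  field_simp

lemma deriv_deriv_g_div_g (hc : c ≠ 0) (hr : r ≠ 0) :
    deriv (deriv (g c)) r / g c r = 2 * (r - arctan r) / ((1 + r ^ 2) ^ 2 * r * arctan r ^ 2) := by
  rw [(hasDerivAt_deriv_g c hr).deriv, g]
  field_simp

end LogDerivatives

section Bounds

variable {c r : ℝ}

lemma logDeriv_g_nonneg (hc : c ≠ 0) (hr : 0 < r) : 0 ≤ logDeriv (g c) r := by
  rw [logDeriv_g hc hr.ne']
  exact div_nonneg (sub_nonneg.2 (div_one_add_sq_le_arctan hr.le))
    (mul_nonneg hr.le (arctan_nonneg.2 hr.le))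

lemma logDeriv_g_le (hc : c ≠ 0) (hr : 0 < r) : logDeriv (g c) r ≤ r / (1 + r ^ 2) := by
  have ha : 0 < arctan r := arctan_pos.2 hr
  rw [logDeriv_g hc hr.ne', div_le_iff₀ (mul_pos hr ha), ← sub_nonneg]
  have key : r / (1 + r ^ 2) * (r * arctan r) - (arctan r - r / (1 + r ^ 2))
      = (r - arctan r) / (1 + r ^ 2) := by
    field_simp
    ring
  rw [key]
  exact div_nonneg (sub_nonneg.2 (arctan_le_self hr.le)) (by positivity)

lemma logDeriv_g_sq_le (hc : c ≠ 0) (hr : 0 < r) : logDeriv (g c) r ^ 2 ≤ 1 / (1 + r ^ 2) := by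
  have hs : r ^ 2 / (1 + r ^ 2) ≤ 1 := (div_le_one (by positivity)).2 (by linarith)
  calc logDeriv (g c) r ^ 2 ≤ (r / (1 + r ^ 2)) ^ 2 :=
        pow_le_pow_left₀ (logDeriv_g_nonneg hc hr) (logDeriv_g_le hc hr) 2
    _ = r ^ 2 / (1 + r ^ 2) * (1 / (1 + r ^ 2)) := by ring
    _ ≤ 1 * (1 / (1 + r ^ 2)) := mul_le_mul_of_nonneg_right hs (by positivity)
    _ = 1 / (1 + r ^ 2) := one_mul _

lemma logDeriv_f_mul_logDeriv_g_le (hc : c ≠ 0) (hr : 0 < r) :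
    logDeriv f r * logDeriv (g c) r ≤ 1 / (1 + r ^ 2) := by
  have hf : logDeriv f r ≤ 1 / r := by
    rw [logDeriv_f hr.ne']
    exact sub_le_self _ (by positivity)
  calc logDeriv f r * logDeriv (g c) r ≤ 1 / r * (r / (1 + r ^ 2)) :=
        mul_le_mul hf (logDeriv_g_le hc hr) (logDeriv_g_nonneg hc hr) (by positivity)
    _ = 1 / (1 + r ^ 2) := by field_simp

lemma deriv_deriv_g_div_g_le (hc : c ≠ 0) (hr : 0 < r) :
    deriv (deriv (g c)) r / g c r ≤ 2 / (1 + r ^ 2) := by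
  have hlin : r ≤ arctan r * (1 + r ^ 2) :=
    (div_le_iff₀ (by positivity)).1 (div_one_add_sq_le_arctan hr.le)
  have hsq : r ^ 2 ≤ arctan r ^ 2 * (1 + r ^ 2) :=
    (div_le_iff₀ (by positivity)).1 (sq_div_one_add_sq_le_arctan_sq r)
  rw [deriv_deriv_g_div_g hc hr.ne', div_le_div_iff₀ (by positivity) (by positivity)]
  calc 2 * (r - arctan r) * (1 + r ^ 2) ≤ 2 * (r * arctan r ^ 2 * (1 + r ^ 2)) := by
        nlinarith [mul_le_mul_of_nonneg_left hsq hr.le]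
    _ ≤ 2 * (r * arctan r ^ 2 * (1 + r ^ 2)) * (1 + r ^ 2) :=
        le_mul_of_one_le_right (by positivity) (by nlinarith)
    _ = 2 * ((1 + r ^ 2) ^ 2 * r * arctan r ^ 2) := by ring

lemma inv_sq_le_one_div_g_sq (hc : c ≠ 0) (hr : r ≠ 0) :
    1 / ((π / 2 * c) ^ 2 * (1 + r ^ 2)) ≤ 1 / g c r ^ 2 := by
  calc 1 / ((π / 2 * c) ^ 2 * (1 + r ^ 2)) = r ^ 2 / (1 + r ^ 2) / ((π / 2 * c) ^ 2 * r ^ 2) := by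
        field_simp
    _ ≤ arctan r ^ 2 / ((π / 2 * c) ^ 2 * r ^ 2) :=
        div_le_div_of_nonneg_right (sq_div_one_add_sq_le_arctan_sq r) (by positivity)
    _ = 1 / g c r ^ 2 := by
        rw [g]
        field_simp

end Bounds

/-- Ricci curvature positivity in the `S^k` directions for a suitable constant:
if `m ≥ 2` and `k ≥ 2`, then there exists `c ∈ (0,1)` such that for every `r > 0`,
`−g″/g − m·f′g′/(fg) + (k−1)(1−(g′)²)/g² − g′h′/(gh) > 0`, where
`g(r) = (π/2)·c·r/arctan r`. -/
theorem statement14 (α : ℝ) (hα : 0 < α) (m k : ℝ) (hm : 2 ≤ m) (hk : 2 ≤ k) :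
    ∃ c ∈ Set.Ioo (0 : ℝ) 1, ∀ r : ℝ, 0 < r →
      -(deriv (deriv (g c)) r / g c r)
        - m * (deriv f r * deriv (g c) r / (f r * g c r))
        + (k - 1) * ((1 - (deriv (g c) r) ^ 2) / (g c r) ^ 2)
        - deriv (g c) r * deriv (h α) r / (g c r * h α r) > 0 := by
  obtain ⟨c, hc, hC⟩ : ∃ c ∈ Set.Ioo (0 : ℝ) 1, π / 2 * c = 1 / (m + 3) := by
    have hm3 : 0 < m + 3 := by linarith
    refine ⟨2 / (π * (m + 3)), ⟨by positivity, ?_⟩, by field_simp⟩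
    exact (div_lt_one (by positivity)).2 (by nlinarith [pi_gt_three])
  refine ⟨c, hc, fun r hr => ?_⟩
  simp only [mul_div_mul_comm, sub_div, ← div_pow, ← logDeriv_apply, logDeriv_h]
  set p := 1 / (1 + r ^ 2) with hp_def
  have hp : 0 < p := by positivity
  have hQ : (m + 3) ^ 2 * p ≤ 1 / g c r ^ 2 := by
    convert inv_sq_le_one_div_g_sq hc.1.ne' hr.ne' using 1
    rw [hC, hp_def]
    field_simp
  have hw : deriv (deriv (g c)) r / g c r ≤ 2 * p := by
    rw [hp_def, mul_one_div]
    exact deriv_deriv_g_div_g_le hc.1.ne' hr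
  have hXu : logDeriv f r * logDeriv (g c) r ≤ p := logDeriv_f_mul_logDeriv_g_le hc.1.ne' hr
  have hH : 0 ≤ logDeriv (g c) r * (α * r / (1 + r ^ 2)) :=
    mul_nonneg (logDeriv_g_nonneg hc.1.ne' hr) (by positivity)
  have hgap : ((m + 3) ^ 2 - 1) * p ≤ 1 / g c r ^ 2 - logDeriv (g c) r ^ 2 := by
    linarith [logDeriv_g_sq_le hc.1.ne' hr]
  have hk1 : 1 / g c r ^ 2 - logDeriv (g c) r ^ 2
      ≤ (k - 1) * (1 / g c r ^ 2 - logDeriv (g c) r ^ 2) :=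
    le_mul_of_one_le_left ((mul_nonneg (by nlinarith) hp.le).trans hgap) (by linarith)
  linarith [mul_le_mul_of_nonneg_left hXu (by linarith : (0 : ℝ) ≤ m),
    mul_pos hp (by nlinarith : (0 : ℝ) < (m + 3) ^ 2 - 3 - m)]
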